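/- Let K ⊆ ℂ̄ be a compact set such that K ∩ σ̃_ap(A) ⊆ σ_{++}(A) (respectively K ∩ σ̃_ap(A) ⊆ σ_{−−}(A)). Then there exist an open neighborhood U of K in ℂ̄ and ε > 0 such that for every λ ∈ U \ {∞} and every x ∈ dom A with ‖(A−λ)x‖ ≤ ε‖x‖ one has [x,x] ≥ ε‖x‖² (respectively −[x,x] ≥ ε‖x‖²). In this case U ∩ σ̃_ap(A) ⊆ σ_{++}(A) (respectively U ∩ σ̃_ap(A) ⊆ σ_{−−}(A)). -/

import Mathlib

open Filter Topology OnePoint Set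

noncomputable section

namespace Paper

variable {H : Type*} [NormedAddCommGroup H] [InnerProductSpace ℂ H]

/-- The indefinite inner product `[x,y] := (Gx, y)` induced by the Gram operator `G`. -/
def brk (G : H →L[ℂ] H) (x y : H) : ℂ := inner ℂ (G x) y

/-- The real part of `[x,y]`; note that `[x,x]` is real when `G` is selfadjoint. -/
def brkRe (G : H →L[ℂ] H) (x y : H) : ℝ := (brk G x y).re

/-- A linear manifold of finite codimension in `H`. -/
def FinCodim (M : Submodule ℂ H) : Prop := FiniteDimensional ℂ (H ⧸ M)

/-- An approximate eigensequence of `A` at the finite point `l`. -/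
def IsApproxSeq (A : H →ₗ.[ℂ] H) (l : ℂ) (x : ℕ → A.domain) : Prop :=
  (∀ n, ‖(x n : H)‖ = 1) ∧
    Tendsto (fun n => A (x n) - l • ((x n : H))) atTop (𝓝 0)

/-- The approximate point spectrum of `A`. -/
def sigmaAp (A : H →ₗ.[ℂ] H) : Set ℂ := {l | ∃ x : ℕ → A.domain, IsApproxSeq A l x}

/-- The type `π₊` condition at `l` relative to the linear manifold `M`. -/
def PiPlusCond (G : H →L[ℂ] H) (A : H →ₗ.[ℂ] H) (l : ℂ) (M : Submodule ℂ H) : Prop :=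
  ∀ x : ℕ → A.domain, (∀ n, (x n : H) ∈ M) → IsApproxSeq A l x →
    0 < atTop.liminf (fun n => brkRe G (x n) (x n))

/-- The type `π₋` condition at `l` relative to the linear manifold `M`. -/
def PiMinusCond (G : H →L[ℂ] H) (A : H →ₗ.[ℂ] H) (l : ℂ) (M : Submodule ℂ H) : Prop :=
  ∀ x : ℕ → A.domain, (∀ n, (x n : H) ∈ M) → IsApproxSeq A l x →
    atTop.limsup (fun n => brkRe G (x n) (x n)) < 0

/-- `l` is a spectral point of type `π₊` of `A`. -/
def sigmaPiPlusAt (G : H →L[ℂ] H) (A : H →ₗ.[ℂ] H) (l : ℂ) : Prop :=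
  l ∈ sigmaAp A ∧ ∃ M : Submodule ℂ H, FinCodim M ∧ PiPlusCond G A l M

/-- `l` is a spectral point of type `π₋` of `A`. -/
def sigmaPiMinusAt (G : H →L[ℂ] H) (A : H →ₗ.[ℂ] H) (l : ℂ) : Prop :=
  l ∈ sigmaAp A ∧ ∃ M : Submodule ℂ H, FinCodim M ∧ PiMinusCond G A l M

/-- `l` is a spectral point of positive type of `A`. -/
def sigmaPPAt (G : H →L[ℂ] H) (A : H →ₗ.[ℂ] H) (l : ℂ) : Prop :=
  l ∈ sigmaAp A ∧ PiPlusCond G A l ⊤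

/-- `l` is a spectral point of negative type of `A`. -/
def sigmaMMAt (G : H →L[ℂ] H) (A : H →ₗ.[ℂ] H) (l : ℂ) : Prop :=
  l ∈ sigmaAp A ∧ PiMinusCond G A l ⊤

/-- An approximate eigensequence of `A` at `∞`. -/
def IsInftyApproxSeq (A : H →ₗ.[ℂ] H) (x : ℕ → A.domain) : Prop :=
  (∀ n, ‖A (x n)‖ = 1) ∧ Tendsto (fun n => ((x n : H))) atTop (𝓝 0)

/-- `A` is a bounded operator. -/
def IsBoundedOp (A : H →ₗ.[ℂ] H) : Prop := ∃ C : ℝ, ∀ x : A.domain, ‖A x‖ ≤ C * ‖(x : H)‖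

/-- The type `π₊` condition at `∞` relative to the linear manifold `M`. -/
def InftyPiPlusCond (G : H →L[ℂ] H) (A : H →ₗ.[ℂ] H) (M : Submodule ℂ H) : Prop :=
  ∀ x : ℕ → A.domain, (∀ n, (x n : H) ∈ M) → IsInftyApproxSeq A x →
    0 < atTop.liminf (fun n => brkRe G (A (x n)) (A (x n)))

/-- The type `π₋` condition at `∞` relative to the linear manifold `M`. -/
def InftyPiMinusCond (G : H →L[ℂ] H) (A : H →ₗ.[ℂ] H) (M : Submodule ℂ H) : Prop :=
  ∀ x : ℕ → A.domain, (∀ n, (x n : H) ∈ M) → IsInftyApproxSeq A x →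
    atTop.limsup (fun n => brkRe G (A (x n)) (A (x n))) < 0

/-- `∞` is a spectral point of type `π₊` of `A`. -/
def sigmaPiPlusInfty (G : H →L[ℂ] H) (A : H →ₗ.[ℂ] H) : Prop :=
  ¬ IsBoundedOp A ∧ ∃ M : Submodule ℂ H, FinCodim M ∧ InftyPiPlusCond G A M

/-- `∞` is a spectral point of type `π₋` of `A`. -/
def sigmaPiMinusInfty (G : H →L[ℂ] H) (A : H →ₗ.[ℂ] H) : Prop :=
  ¬ IsBoundedOp A ∧ ∃ M : Submodule ℂ H, FinCodim M ∧ InftyPiMinusCond G A M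

/-- `∞` is a spectral point of positive type of `A`. -/
def sigmaPPInfty (G : H →L[ℂ] H) (A : H →ₗ.[ℂ] H) : Prop :=
  ¬ IsBoundedOp A ∧ InftyPiPlusCond G A ⊤

/-- `∞` is a spectral point of negative type of `A`. -/
def sigmaMMInfty (G : H →L[ℂ] H) (A : H →ₗ.[ℂ] H) : Prop :=
  ¬ IsBoundedOp A ∧ InftyPiMinusCond G A ⊤

/-- A subset of the Riemann sphere `ℂ̄ = ℂ ∪ {∞}` given by a condition at finite
points and a condition at `∞`. -/
def extSet (Pf : ℂ → Prop) (Pinf : Prop) : Set (OnePoint ℂ) :=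
  {p | (∃ l : ℂ, p = (l : OnePoint ℂ) ∧ Pf l) ∨ (p = ∞ ∧ Pinf)}

/-- The extended approximate point spectrum `σ̃_ap(A) ⊆ ℂ̄`. -/
def extSigmaAp (A : H →ₗ.[ℂ] H) : Set (OnePoint ℂ) :=
  extSet (fun l => l ∈ sigmaAp A) (¬ IsBoundedOp A)

/-- The set `σ_{π+}(A) ⊆ ℂ̄`. -/
def extPiPlus (G : H →L[ℂ] H) (A : H →ₗ.[ℂ] H) : Set (OnePoint ℂ) :=
  extSet (sigmaPiPlusAt G A) (sigmaPiPlusInfty G A)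

/-- The set `σ_{π−}(A) ⊆ ℂ̄`. -/
def extPiMinus (G : H →L[ℂ] H) (A : H →ₗ.[ℂ] H) : Set (OnePoint ℂ) :=
  extSet (sigmaPiMinusAt G A) (sigmaPiMinusInfty G A)

/-- The set `σ_{++}(A) ⊆ ℂ̄`. -/
def extPP (G : H →L[ℂ] H) (A : H →ₗ.[ℂ] H) : Set (OnePoint ℂ) :=
  extSet (sigmaPPAt G A) (sigmaPPInfty G A)

/-- The set `σ_{−−}(A) ⊆ ℂ̄`. -/
def extMM (G : H →L[ℂ] H) (A : H →ₗ.[ℂ] H) : Set (OnePoint ℂ) :=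
  extSet (sigmaMMAt G A) (sigmaMMInfty G A)

/-- The extended set of points of regular type, `r̃(A) = ℂ̄ \ σ̃_ap(A)`. -/
def extReg (A : H →ₗ.[ℂ] H) : Set (OnePoint ℂ) := (extSigmaAp A)ᶜ

/-- `A` is `G`-symmetric: `[Ax,y] = [x,Ay]` for `x, y ∈ dom A`. -/
def GSymm (G : H →L[ℂ] H) (A : H →ₗ.[ℂ] H) : Prop :=
  ∀ x y : A.domain, brk G (A x) (y : H) = brk G (x : H) (A y)

/-- A bounded operator `T` is `G`-symmetric (equivalently, `G`-selfadjoint):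
`[Tx,y] = [x,Ty]` for all `x, y`. -/
def GSymmB (G T : H →L[ℂ] H) : Prop := ∀ x y : H, brk G (T x) y = brk G x (T y)

/-- `l ∈ ρ(A)`: the operator `A − l` maps `dom A` bijectively onto `H`
with a bounded inverse. -/
def InResolventSet (A : H →ₗ.[ℂ] H) (l : ℂ) : Prop :=
  (∀ y : H, ∃ x : A.domain, A x - l • (x : H) = y) ∧
  ∃ c : ℝ, 0 < c ∧ ∀ x : A.domain, c * ‖(x : H)‖ ≤ ‖A x - l • (x : H)‖

/-- The spectrum `σ(A) = ℂ \ ρ(A)`. -/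
def spectrumSet (A : H →ₗ.[ℂ] H) : Set ℂ := {l | ¬ InResolventSet A l}

/-- `ker (A − l)` as a submodule of `H`. -/
def kerAt (A : H →ₗ.[ℂ] H) (l : ℂ) : Submodule ℂ H where
  carrier := {x | ∃ hx : x ∈ A.domain, A ⟨x, hx⟩ = l • x}
  zero_mem' := ⟨A.domain.zero_mem, by
    have : (⟨(0 : H), A.domain.zero_mem⟩ : A.domain) = 0 := rfl
    rw [this, A.map_zero, smul_zero]⟩
  add_mem' := by
    rintro a b ⟨ha, ea⟩ ⟨hb, eb⟩
    refine ⟨A.domain.add_mem ha hb, ?_⟩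
    have : (⟨a + b, A.domain.add_mem ha hb⟩ : A.domain) = ⟨a, ha⟩ + ⟨b, hb⟩ := rfl
    rw [this, A.map_add, ea, eb, smul_add]
  smul_mem' := by
    rintro c x ⟨hx, ex⟩
    refine ⟨A.domain.smul_mem c hx, ?_⟩
    have : (⟨c • x, A.domain.smul_mem c hx⟩ : A.domain) = c • (⟨x, hx⟩ : A.domain) := rfl
    rw [this, A.map_smul, ex, smul_comm]

/-- The range of `A − l`. -/
def ranAt (A : H →ₗ.[ℂ] H) (l : ℂ) : Set H :=
  {y | ∃ x : A.domain, A x - l • (x : H) = y}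

/-- A uniformly positive subspace. -/
def IsUnifPos (G : H →L[ℂ] H) (L : Submodule ℂ H) : Prop :=
  ∃ δ : ℝ, 0 < δ ∧ ∀ x ∈ L, δ * ‖x‖ ^ 2 ≤ brkRe G x x

/-- A uniformly negative subspace. -/
def IsUnifNeg (G : H →L[ℂ] H) (L : Submodule ℂ H) : Prop :=
  ∃ δ : ℝ, 0 < δ ∧ ∀ x ∈ L, δ * ‖x‖ ^ 2 ≤ -brkRe G x x

/-- A positive set: every nonzero element `x` has `[x,x] > 0`. -/
def IsPosSet (G : H →L[ℂ] H) (S : Set H) : Prop := ∀ x ∈ S, x ≠ 0 → 0 < brkRe G x x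

/-- A negative set: every nonzero element `x` has `[x,x] < 0`. -/
def IsNegSet (G : H →L[ℂ] H) (S : Set H) : Prop := ∀ x ∈ S, x ≠ 0 → brkRe G x x < 0

/-- The orthogonal companion `L^{[⊥]}` of `L` with respect to `[·,·]`. -/
def orthCompanion (G : H →L[ℂ] H) (L : Submodule ℂ H) : Submodule ℂ H where
  carrier := {x | ∀ y ∈ L, brk G x y = 0}
  zero_mem' := by intro y hy; simp [brk]
  add_mem' := by
    intro a b ha hb y hy
    simp only [brk, map_add, inner_add_left] at *
    rw [ha y hy, hb y hy, add_zero]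
  smul_mem' := by
    intro c x hx y hy
    simp only [brk, _root_.map_smul, inner_smul_left] at *
    rw [hx y hy, mul_zero]

/-- The isotropic part `L° = L ∩ L^{[⊥]}` of `L`. -/
def isoPart (G : H →L[ℂ] H) (L : Submodule ℂ H) : Submodule ℂ H := L ⊓ orthCompanion G L

/-- A fundamental decomposition `L = L₊ [∔] L₋ [∔] L°` of `L`. -/
def IsFundDecomp (G : H →L[ℂ] H) (L Lp Lm L0 : Submodule ℂ H) : Prop :=
  Lp ≤ L ∧ Lm ≤ L ∧ L0 = isoPart G L ∧
  IsPosSet G (Lp : Set H) ∧ IsNegSet G (Lm : Set H) ∧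
  (∀ x ∈ Lp, ∀ y ∈ Lm, brk G x y = 0) ∧
  (∀ x ∈ L, ∃ p ∈ Lp, ∃ m ∈ Lm, ∃ z ∈ L0, x = p + m + z) ∧
  (∀ p ∈ Lp, ∀ m ∈ Lm, ∀ z ∈ L0, p + m + z = 0 → p = 0 ∧ m = 0 ∧ z = 0)

/-- A Jordan chain `x 0, …, x (n-1)` of `A` at `l` of length `n`. -/
def IsJordanChain (A : H →ₗ.[ℂ] H) (l : ℂ) (n : ℕ) (x : ℕ → A.domain) : Prop :=
  0 < n ∧ (∀ i < n, (x i : H) ≠ 0) ∧ A (x 0) = l • ((x 0 : H)) ∧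
  ∀ i, i + 1 < n → A (x (i + 1)) = l • ((x (i + 1) : H)) + (x i : H)

/-- A Jordan chain of `A` at `l` of infinite length. -/
def IsInfJordanChain (A : H →ₗ.[ℂ] H) (l : ℂ) (x : ℕ → A.domain) : Prop :=
  (∀ n, (x n : H) ≠ 0) ∧ A (x 0) = l • ((x 0 : H)) ∧
  ∀ n, A (x (n + 1)) = l • ((x (n + 1) : H)) + (x n : H)

/-- The algebraic eigenspace `L_λ(A) = ⋃ₙ ker (A − λ)ⁿ`. -/
def algEig (A : H →ₗ.[ℂ] H) (l : ℂ) : Set H :=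
  {x | ∃ n : ℕ, ∃ c : ℕ → H, c 0 = 0 ∧ c n = x ∧
    ∀ i < n, ∃ h : c (i + 1) ∈ A.domain, A ⟨c (i + 1), h⟩ = l • c (i + 1) + c i}

/-- The bounded operator `B` commutes with `A`, i.e. `BA ⊆ AB`. -/
def CommutesWith (B : H →L[ℂ] H) (A : H →ₗ.[ℂ] H) : Prop :=
  ∀ x : A.domain, ∃ h : B (x : H) ∈ A.domain, A ⟨B (x : H), h⟩ = B (A x)

/-- `R` is the (everywhere defined, bounded) resolvent of `A` at `μ`. -/
def IsResolventOf (A : H →ₗ.[ℂ] H) (mu : ℂ) (R : H →L[ℂ] H) : Prop :=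
  (∀ y : H, ∃ h : R y ∈ A.domain, A ⟨R y, h⟩ - mu • R y = y) ∧
  (∀ x : A.domain, R (A x - mu • (x : H)) = (x : H))

/-- The system `𝓜(I)` of all finite unions of bounded intervals whose closure
is contained in `I`. -/
def MSet (I : Set ℝ) : Set (Set ℝ) :=
  {D | ∃ F : Finset (Set ℝ),
    (∀ J ∈ F, J.OrdConnected ∧ Bornology.IsBounded J ∧ closure J ⊆ I) ∧ D = ⋃₀ ↑F}

/-- The system `𝓜_S(I)`: elements of `𝓜(I)` whose boundary does not meet `S`. -/
def MSetS (I : Set ℝ) (S : Set ℝ) : Set (Set ℝ) :=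
  {D | D ∈ MSet I ∧ frontier D ∩ S = ∅}

/-- `l` belongs to the resolvent set of the restriction `A|L` of `A`
to the (`A`-invariant) subspace `L`. -/
def InResolventRestr (A : H →ₗ.[ℂ] H) (L : Submodule ℂ H) (l : ℂ) : Prop :=
  (∀ x : A.domain, (x : H) ∈ L → A x - l • (x : H) ∈ L) ∧
  (∀ y ∈ L, ∃ x : A.domain, (x : H) ∈ L ∧ A x - l • (x : H) = y) ∧
  ∃ c : ℝ, 0 < c ∧ ∀ x : A.domain, (x : H) ∈ L → c * ‖(x : H)‖ ≤ ‖A x - l • (x : H)‖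

/-- The spectrum of the restriction `A|L`. -/
def specRestr (A : H →ₗ.[ℂ] H) (L : Submodule ℂ H) : Set ℂ :=
  {l | ¬ InResolventRestr A L l}

/-- The closure of `S ∩ dom A` with respect to the graph norm of `A`. -/
def graphClosure (A : H →ₗ.[ℂ] H) (S : Set H) : Set H :=
  {x | ∃ hx : x ∈ A.domain, ((x, A ⟨x, hx⟩) : H × H) ∈
    closure {p : H × H | ∃ hy : p.1 ∈ A.domain, p.1 ∈ S ∧ A ⟨p.1, hy⟩ = p.2}}

/-- The sum `A + F` of `A` and a bounded operator `F`, with domain `dom A`. -/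
def addCLM (A : H →ₗ.[ℂ] H) (F : H →L[ℂ] H) : H →ₗ.[ℂ] H :=
  ⟨A.domain, A.toFun + (F.toLinearMap.comp A.domain.subtype)⟩

/-- The composition `G ∘ A` as a partially defined operator with domain `dom A`. -/
def compCLM (G : H →L[ℂ] H) (A : H →ₗ.[ℂ] H) : H →ₗ.[ℂ] H :=
  ⟨A.domain, G.toLinearMap.comp A.toFun⟩

/-- A map `f` defined on `dom A` is `A`-compact: any sequence bounded in the graph
norm of `A` has a subsequence whose image under `f` converges. -/
def IsACompact (A : H →ₗ.[ℂ] H) (f : A.domain → H) : Prop :=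
  ∀ x : ℕ → A.domain, (∃ C : ℝ, ∀ n, ‖(x n : H)‖ + ‖A (x n)‖ ≤ C) →
    ∃ φ : ℕ → ℕ, StrictMono φ ∧ ∃ y : H, Tendsto (fun n => f (x (φ n))) atTop (𝓝 y)

/-- `(L, [·,·])` is a Hilbert space: `[·,·]` is positive definite on `L` and `L` is
complete with respect to the induced norm. -/
def IsHilbertWrt (G : H →L[ℂ] H) (L : Submodule ℂ H) : Prop :=
  IsPosSet G (L : Set H) ∧
  ∀ u : ℕ → H, (∀ n, u n ∈ L) →
    (∀ ε : ℝ, 0 < ε → ∃ N, ∀ m ≥ N, ∀ n ≥ N, brkRe G (u m - u n) (u m - u n) < ε) →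
    ∃ v ∈ L, Tendsto (fun n => brkRe G (u n - v) (u n - v)) atTop (𝓝 0)

/-- `(L, −[·,·])` is a Hilbert space. -/
def IsAntiHilbertWrt (G : H →L[ℂ] H) (L : Submodule ℂ H) : Prop :=
  IsNegSet G (L : Set H) ∧
  ∀ u : ℕ → H, (∀ n, u n ∈ L) →
    (∀ ε : ℝ, 0 < ε → ∃ N, ∀ m ≥ N, ∀ n ≥ N, -brkRe G (u m - u n) (u m - u n) < ε) →
    ∃ v ∈ L, Tendsto (fun n => brkRe G (u n - v) (u n - v)) atTop (𝓝 0)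


/-- The sequence `x` converges weakly to `0` in `H`. -/
def WeakNullSeq (x : ℕ → H) : Prop :=
  ∀ y : H, Tendsto (fun n => (inner ℂ y (x n) : ℂ)) atTop (𝓝 0)

lemma abs_brkRe_le (G : H →L[ℂ] H) (x y : H) : |brkRe G x y| ≤ ‖G‖ * ‖x‖ * ‖y‖ := by
  have h1 : |brkRe G x y| ≤ ‖brk G x y‖ := by
    simpa [brkRe] using Complex.abs_re_le_norm (brk G x y)
  refine h1.trans ?_
  have h2 : ‖brk G x y‖ ≤ ‖G x‖ * ‖y‖ := norm_inner_le_norm _ _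
  refine h2.trans ?_
  have := G.le_opNorm x
  have hy : (0:ℝ) ≤ ‖y‖ := norm_nonneg _
  nlinarith [norm_nonneg (G x)]

lemma brkRe_zero (G : H →L[ℂ] H) : brkRe G (0:H) 0 = 0 := by simp [brkRe, brk]

lemma brkRe_smul (G : H →L[ℂ] H) (c : ℂ) (x : H) :
    brkRe G (c • x) (c • x) = ‖c‖ ^ 2 * brkRe G x x := by
  have : brk G (c • x) (c • x) = ((‖c‖^2 : ℝ) : ℂ) * brk G x x := by
    simp only [brk, _root_.map_smul, inner_smul_left, inner_smul_right]
    rw [← mul_assoc, Complex.mul_conj]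
    rw [Complex.normSq_eq_norm_sq]
  rw [brkRe, this, Complex.re_ofReal_mul]; rfl

lemma brkRe_diff_le (G : H →L[ℂ] H) (w v : H) :
    |brkRe G w w - brkRe G v v| ≤ ‖G‖ * ‖w - v‖ * ‖w‖ + ‖G‖ * ‖v‖ * ‖w - v‖ := by
  have hsplit : brkRe G w w - brkRe G v v = brkRe G (w - v) w + brkRe G v (w - v) := by
    simp only [brkRe, brk, map_sub, inner_sub_left, inner_sub_right, Complex.sub_re,
      Complex.add_re]
    ring
  rw [hsplit]
  calc |brkRe G (w - v) w + brkRe G v (w - v)|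
      ≤ |brkRe G (w - v) w| + |brkRe G v (w - v)| := abs_add_le _ _
    _ ≤ ‖G‖ * ‖w - v‖ * ‖w‖ + ‖G‖ * ‖v‖ * ‖w - v‖ :=
        add_le_add (abs_brkRe_le _ _ _) (abs_brkRe_le _ _ _)

lemma brkRe_neg (G : H →L[ℂ] H) (x y : H) : brkRe (-G) x y = - brkRe G x y := by
  simp [brkRe, brk, inner_neg_left]


lemma isBddBelow_of (f : ℕ → ℝ) (B : ℝ) (h : ∀ n, B ≤ f n) :
    Filter.IsBoundedUnder (· ≥ ·) atTop f :=
  ⟨B, Filter.eventually_map.mpr (Eventually.of_forall h)⟩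

lemma isBddAbove_of (f : ℕ → ℝ) (B : ℝ) (h : ∀ n, f n ≤ B) :
    Filter.IsBoundedUnder (· ≤ ·) atTop f :=
  ⟨B, Filter.eventually_map.mpr (Eventually.of_forall h)⟩

lemma exists_pos_ev_lt_of_liminf_pos {f : ℕ → ℝ} {B : ℝ} (hb : ∀ n, B ≤ f n)
    (h : 0 < atTop.liminf f) : ∃ c : ℝ, 0 < c ∧ ∀ᶠ n in atTop, c < f n :=
  ⟨atTop.liminf f / 2, by linarith,
    Filter.eventually_lt_of_lt_liminf (by linarith) (isBddBelow_of f B hb)⟩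

lemma liminf_neg_pos_iff {f : ℕ → ℝ} {B : ℝ} (hb : ∀ n, |f n| ≤ B) :
    (0 < atTop.liminf (fun n => - f n)) ↔ atTop.limsup f < 0 := by
  have hub : ∀ n, f n ≤ B := fun n => (abs_le.1 (hb n)).2
  have hlb : ∀ n, -B ≤ f n := fun n => (abs_le.1 (hb n)).1
  constructor
  · intro h
    obtain ⟨c, hc, hev⟩ := exists_pos_ev_lt_of_liminf_pos
      (f := fun n => -f n) (B := -B) (fun n => by show -B ≤ -f n; linarith [hub n]) h
    have : atTop.limsup f ≤ -c := by
      refine Filter.limsup_le_of_le ((isBddBelow_of f (-B) hlb).isCoboundedUnder_le) ?_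
      exact hev.mono fun n hn => by linarith
    linarith
  · intro h
    have h2 : atTop.limsup f < atTop.limsup f / 2 := by linarith
    have hev := Filter.eventually_lt_of_limsup_lt h2 (isBddAbove_of f B hub)
    have : -(atTop.limsup f / 2) ≤ atTop.liminf (fun n => -f n) := by
      refine Filter.le_liminf_of_le
        ((isBddAbove_of (fun n => -f n) B (fun n => by show -f n ≤ B; linarith [hlb n])).isCoboundedUnder_ge) ?_
      exact hev.mono fun n hn => by linarith
    linarith

lemma normalize_violation (G : H →L[ℂ] H) (A : H →ₗ.[ℂ] H) (l : ℂ) (ε : ℝ)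
    (x : A.domain)
    (h1 : ‖A x - l • (x : H)‖ ≤ ε * ‖(x : H)‖)
    (h2 : brkRe G (x : H) (x : H) < ε * ‖(x : H)‖ ^ 2) :
    ∃ y : A.domain, ‖(y : H)‖ = 1 ∧ ‖A y - l • (y : H)‖ ≤ ε ∧
      brkRe G (y : H) (y : H) < ε := by
  have hx0 : (x : H) ≠ 0 := by
    intro h0
    rw [h0] at h2
    simp [brkRe_zero] at h2
  have hr : (0:ℝ) < ‖(x : H)‖ := norm_pos_iff.mpr hx0
  set r : ℝ := ‖(x : H)‖ with hrdef
  refine ⟨((r⁻¹ : ℝ) : ℂ) • x, ?_, ?_, ?_⟩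
  · show ‖(((r⁻¹ : ℝ) : ℂ) • (x : H))‖ = 1
    rw [norm_smul, Complex.norm_real, Real.norm_eq_abs, abs_of_pos (by positivity)]
    exact inv_mul_cancel₀ (ne_of_gt hr)
  · have hAy : A (((r⁻¹ : ℝ) : ℂ) • x) - l • ((((r⁻¹ : ℝ) : ℂ) • x : A.domain) : H)
        = ((r⁻¹ : ℝ) : ℂ) • (A x - l • (x : H)) := by
      rw [A.map_smul]
      push_cast
      rw [smul_sub, smul_comm]
    rw [hAy, norm_smul, Complex.norm_real, Real.norm_eq_abs, abs_of_pos (by positivity)]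
    calc r⁻¹ * ‖A x - l • (x : H)‖ ≤ r⁻¹ * (ε * r) := by
          apply mul_le_mul_of_nonneg_left h1 (by positivity)
      _ = ε := by field_simp
  · show brkRe G (((r⁻¹ : ℝ) : ℂ) • (x : H)) (((r⁻¹ : ℝ) : ℂ) • (x : H)) < ε
    rw [brkRe_smul, Complex.norm_real, Real.norm_eq_abs, abs_of_pos (by positivity)]
    have : (r⁻¹) ^ 2 * brkRe G (x : H) (x : H) < (r⁻¹) ^ 2 * (ε * r ^ 2) := by
      apply mul_lt_mul_of_pos_left h2 (by positivity)
    calc (r⁻¹) ^ 2 * brkRe G (x : H) (x : H) < (r⁻¹) ^ 2 * (ε * r ^ 2) := this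
      _ = ε := by field_simp

lemma exists_lowerBound_of_not_mem_sigmaAp (A : H →ₗ.[ℂ] H) (l : ℂ)
    (h : l ∉ sigmaAp A) :
    ∃ c : ℝ, 0 < c ∧ ∀ x : A.domain, c * ‖(x : H)‖ ≤ ‖A x - l • (x : H)‖ := by
  by_contra hc
  push_neg at hc
  have key : ∀ n : ℕ, ∃ y : A.domain, ‖(y : H)‖ = 1 ∧
      ‖A y - l • (y : H)‖ ≤ 1 / (n + 1) := by
    intro n
    obtain ⟨x, hx⟩ := hc (1 / (n + 1)) (by positivity)
    have hx' : ‖A x - l • (x : H)‖ ≤ (1 / (n + 1)) * ‖(x : H)‖ := le_of_lt hx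
    have hx0 : (x : H) ≠ 0 := by
      intro h0
      rw [h0] at hx
      simp at hx
      linarith [norm_nonneg ((A x : H))]
    have hr : (0:ℝ) < ‖(x : H)‖ := norm_pos_iff.mpr hx0
    set r : ℝ := ‖(x : H)‖
    refine ⟨((r⁻¹ : ℝ) : ℂ) • x, ?_, ?_⟩
    · show ‖(((r⁻¹ : ℝ) : ℂ) • (x : H))‖ = 1
      rw [norm_smul, Complex.norm_real, Real.norm_eq_abs, abs_of_pos (by positivity)]
      exact inv_mul_cancel₀ (ne_of_gt hr)
    · have hAy : A (((r⁻¹ : ℝ) : ℂ) • x) - l • ((((r⁻¹ : ℝ) : ℂ) • x : A.domain) : H)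
          = ((r⁻¹ : ℝ) : ℂ) • (A x - l • (x : H)) := by
        rw [A.map_smul]
        push_cast
        rw [smul_sub, smul_comm]
      rw [hAy, norm_smul, Complex.norm_real, Real.norm_eq_abs, abs_of_pos (by positivity)]
      calc r⁻¹ * ‖A x - l • (x : H)‖ ≤ r⁻¹ * ((1/(n+1)) * r) := by
            apply mul_le_mul_of_nonneg_left hx' (by positivity)
        _ = 1 / (n + 1) := by field_simp
  choose y hy1 hy2 using key
  apply h
  refine ⟨y, hy1, ?_⟩
  apply squeeze_zero_norm hy2
  exact tendsto_one_div_add_atTop_nhds_zero_nat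



lemma bound_brkRe_one (G : H →L[ℂ] H) {z : H} (hz : ‖z‖ = 1) : |brkRe G z z| ≤ ‖G‖ := by
  have h := abs_brkRe_le G z z
  rw [hz] at h
  simpa using h

lemma localPP_of_PP (G : H →L[ℂ] H) (A : H →ₗ.[ℂ] H) (l₀ : ℂ)
    (hPP : PiPlusCond G A l₀ ⊤) :
    ∃ δ ε : ℝ, 0 < δ ∧ 0 < ε ∧ ∀ l : ℂ, ‖l - l₀‖ < δ → ∀ x : A.domain,
      ‖A x - l • (x : H)‖ ≤ ε * ‖(x : H)‖ →
        ε * ‖(x : H)‖ ^ 2 ≤ brkRe G (x : H) (x : H) := by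
  by_contra hcon
  push_neg at hcon
  have key : ∀ n : ℕ, ∃ (l : ℂ) (y : A.domain), ‖l - l₀‖ < 1/(n+1) ∧ ‖(y:H)‖ = 1 ∧
      ‖A y - l • (y:H)‖ ≤ 1/(n+1) ∧ brkRe G (y:H) (y:H) < 1/(n+1) := by
    intro n
    obtain ⟨l, hl, x, hx1, hx2⟩ := hcon (1/(n+1)) (1/(n+1)) (by positivity) (by positivity)
    obtain ⟨y, hy1, hy2, hy3⟩ := normalize_violation G A l (1/(n+1)) x hx1 hx2
    exact ⟨l, y, hl, hy1, hy2, hy3⟩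
  choose l y hl hy1 hy2 hy3 using key
  have happ : IsApproxSeq A l₀ y := by
    refine ⟨hy1, ?_⟩
    apply squeeze_zero_norm (a := fun n : ℕ => 2/((n:ℝ)+1)) ?_ ?_
    · intro n
      have hsplit : A (y n) - l₀ • ((y n : H)) =
          (A (y n) - l n • (y n : H)) + (l n - l₀) • (y n : H) := by
        rw [sub_smul]; abel
      rw [hsplit]
      calc ‖(A (y n) - l n • ((y n):H)) + (l n - l₀) • ((y n):H)‖
          ≤ ‖A (y n) - l n • ((y n):H)‖ + ‖(l n - l₀) • ((y n):H)‖ := norm_add_le _ _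
        _ ≤ 1/(n+1) + 1/(n+1) := by
            refine add_le_add (hy2 n) ?_
            rw [norm_smul, hy1 n, mul_one]
            exact le_of_lt (hl n)
        _ = 2/((n:ℝ)+1) := by ring
    · have h2 : Tendsto (fun n : ℕ => 2 * (1/((n:ℝ)+1))) atTop (𝓝 (2*0)) :=
        tendsto_one_div_add_atTop_nhds_zero_nat.const_mul 2
      simpa [div_eq_mul_inv] using h2
  have hpos := hPP y (fun n => trivial) happ
  obtain ⟨c, hc, hev⟩ := exists_pos_ev_lt_of_liminf_pos (B := -‖G‖)
    (fun n => (abs_le.1 (bound_brkRe_one G (hy1 n))).1) hpos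
  have hev2 : ∀ᶠ n : ℕ in atTop, (1:ℝ)/((n:ℝ)+1) < c :=
    tendsto_one_div_add_atTop_nhds_zero_nat.eventually_lt_const hc
  obtain ⟨n, h1, h2⟩ := (hev.and hev2).exists
  linarith [hy3 n]

lemma piPlusCond_neg_iff (G : H →L[ℂ] H) (A : H →ₗ.[ℂ] H) (l : ℂ) (M : Submodule ℂ H) :
    PiPlusCond (-G) A l M ↔ PiMinusCond G A l M := by
  have hrw : ∀ x : ℕ → A.domain,
      (fun n => brkRe (-G) ((x n : H)) ((x n : H))) =
        fun n => -(brkRe G ((x n : H)) ((x n : H))) :=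
    fun x => funext fun n => brkRe_neg G _ _
  constructor
  · intro h x hM hx
    have h2 := h x hM hx
    rw [hrw x] at h2
    exact (liminf_neg_pos_iff (fun n => bound_brkRe_one G (hx.1 n))).1 h2
  · intro h x hM hx
    have h2 := h x hM hx
    rw [hrw x]
    exact (liminf_neg_pos_iff (fun n => bound_brkRe_one G (hx.1 n))).2 h2

lemma inftyPiPlusCond_neg_iff (G : H →L[ℂ] H) (A : H →ₗ.[ℂ] H) (M : Submodule ℂ H) :
    InftyPiPlusCond (-G) A M ↔ InftyPiMinusCond G A M := by
  have hrw : ∀ x : ℕ → A.domain,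
      (fun n => brkRe (-G) ((A (x n) : H)) ((A (x n) : H))) =
        fun n => -(brkRe G ((A (x n) : H)) ((A (x n) : H))) :=
    fun x => funext fun n => brkRe_neg G _ _
  constructor
  · intro h x hM hx
    have h2 := h x hM hx
    rw [hrw x] at h2
    exact (liminf_neg_pos_iff (fun n => bound_brkRe_one G (hx.1 n))).1 h2
  · intro h x hM hx
    have h2 := h x hM hx
    rw [hrw x]
    exact (liminf_neg_pos_iff (fun n => bound_brkRe_one G (hx.1 n))).2 h2

lemma extPP_neg (G : H →L[ℂ] H) (A : H →ₗ.[ℂ] H) : extPP (-G) A = extMM G A := by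
  ext p
  simp only [extPP, extMM, extSet, sigmaPPAt, sigmaMMAt, sigmaPPInfty, sigmaMMInfty,
    mem_setOf_eq, piPlusCond_neg_iff, inftyPiPlusCond_neg_iff]



lemma inftyPP_claim (G : H →L[ℂ] H) (A : H →ₗ.[ℂ] H) (hInf : InftyPiPlusCond G A ⊤) :
    ∃ R ε : ℝ, 0 < ε ∧ ∀ l : ℂ, R < ‖l‖ → ∀ x : A.domain,
      ‖A x - l • (x : H)‖ ≤ ε * ‖(x : H)‖ →
        ε * ‖(x : H)‖ ^ 2 ≤ brkRe G (x : H) (x : H) := by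
  by_contra hcon
  push_neg at hcon
  have key : ∀ n : ℕ, ∃ (l : ℂ) (y : A.domain), ((n:ℝ) + 1) < ‖l‖ ∧ ‖(y:H)‖ = 1 ∧
      ‖A y - l • (y:H)‖ ≤ 1/(n+1) ∧ brkRe G (y:H) (y:H) < 1/(n+1) := by
    intro n
    obtain ⟨l, hl, x, hx1, hx2⟩ := hcon ((n:ℝ)+1) (1/(n+1)) (by positivity)
    obtain ⟨y, hy1, hy2, hy3⟩ := normalize_violation G A l (1/(n+1)) x hx1 hx2
    exact ⟨l, y, hl, hy1, hy2, hy3⟩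
  choose l y hl hy1 hy2 hy3 using key
  set t : ℕ → ℝ := fun n => ‖(A (y n) : H)‖ with ht
  have hη1 : ∀ n : ℕ, (1:ℝ)/((n:ℝ)+1) ≤ 1 := by
    intro n
    rw [div_le_one (by positivity)]
    linarith [Nat.cast_nonneg (α := ℝ) n]
  have hlle : ∀ n, ‖l n‖ ≤ t n + 1/((n:ℝ)+1) := by
    intro n
    have h1 : ‖l n • ((y n : H))‖ - ‖(A (y n) : H)‖ ≤ ‖A (y n) - l n • ((y n) : H)‖ := by
      rw [norm_sub_rev]
      exact norm_sub_norm_le _ _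
    rw [norm_smul, hy1 n, mul_one] at h1
    have := hy2 n
    simp only [ht]
    linarith
  have htlb : ∀ n : ℕ, (n:ℝ) < t n := by
    intro n
    have := hlle n
    have := hl n
    have := hη1 n
    linarith
  have ht0 : ∀ n, 0 < t n := fun n => lt_of_le_of_lt (Nat.cast_nonneg n) (htlb n)
  set u : ℕ → A.domain := fun n => (((t n)⁻¹ : ℝ) : ℂ) • y n with hu
  have huH : ∀ n, ((u n : H)) = (((t n)⁻¹ : ℝ) : ℂ) • ((y n) : H) := fun n => rfl
  have hAu : ∀ n, (A (u n) : H) = (((t n)⁻¹ : ℝ):ℂ) • (A (y n) : H) := fun n => A.map_smul _ _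
  have hAu1 : ∀ n, ‖(A (u n) : H)‖ = 1 := by
    intro n
    rw [hAu n, norm_smul, Complex.norm_real, Real.norm_eq_abs,
      abs_of_pos (inv_pos.2 (ht0 n))]
    exact inv_mul_cancel₀ (ne_of_gt (ht0 n))
  have hu0 : Tendsto (fun n => ((u n : H))) atTop (𝓝 0) := by
    apply squeeze_zero_norm' (a := fun n : ℕ => 1/(n:ℝ)) ?_ tendsto_one_div_atTop_nhds_zero_nat
    filter_upwards [eventually_ge_atTop 1] with n hn
    rw [huH n, norm_smul, Complex.norm_real, Real.norm_eq_abs,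
      abs_of_pos (inv_pos.2 (ht0 n)), hy1 n, mul_one, one_div]
    have hn' : (1:ℝ) ≤ (n:ℝ) := by exact_mod_cast hn
    exact inv_anti₀ (by linarith) (le_of_lt (htlb n))
  have happ : IsInftyApproxSeq A u := ⟨hAu1, hu0⟩
  have hpos := hInf u (fun n => trivial) happ
  obtain ⟨c, hc, hev⟩ := exists_pos_ev_lt_of_liminf_pos (B := -‖G‖)
    (fun n => (abs_le.1 (bound_brkRe_one G (hAu1 n))).1) hpos
  have hupper : ∀ᶠ n : ℕ in atTop,
      brkRe G ((A (u n) : H)) ((A (u n) : H)) ≤ (4 + 3*‖G‖) * (1/(n:ℝ)) := by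
    filter_upwards [eventually_ge_atTop 1] with n hn
    have hn1 : (1:ℝ) ≤ (n:ℝ) := by exact_mod_cast hn
    have hT1 : (1:ℝ) ≤ t n := le_trans hn1 (le_of_lt (htlb n))
    have hT0 : (0:ℝ) < t n := by linarith
    have hTinv : (t n)⁻¹ ≤ 1/(n:ℝ) := by
      rw [one_div]
      exact inv_anti₀ (by linarith) (le_of_lt (htlb n))
    have hTi1 : (t n)⁻¹ ≤ 1 := by
      rw [← inv_one]
      exact inv_anti₀ one_pos hT1
    have hηn : (1:ℝ)/((n:ℝ)+1) ≤ 1/(n:ℝ) :=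
      one_div_le_one_div_of_le (by linarith) (by linarith)
    have hid : (A (u n) : H) - l n • ((u n : H)) =
        (((t n)⁻¹:ℝ):ℂ) • ((A (y n):H) - l n • ((y n):H)) := by
      rw [hAu n, huH n, smul_sub, smul_comm (l n)]
    set w := (A (u n) : H) with hwdef
    set v := l n • ((u n : H)) with hvdef
    have hw1 : ‖w‖ = 1 := hAu1 n
    have hwv : ‖w - v‖ ≤ (t n)⁻¹ * (1/((n:ℝ)+1)) := by
      rw [hid, norm_smul, Complex.norm_real, Real.norm_eq_abs, abs_of_pos (inv_pos.2 hT0)]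
      exact mul_le_mul_of_nonneg_left (hy2 n) (by positivity)
    have hwv' : ‖w - v‖ ≤ (t n)⁻¹ := by
      refine hwv.trans ?_
      have : (t n)⁻¹ * (1/((n:ℝ)+1)) ≤ (t n)⁻¹ * 1 :=
        mul_le_mul_of_nonneg_left (hη1 n) (by positivity)
      simpa using this
    have hv2 : ‖v‖ ≤ 2 := by
      have hvle : ‖v‖ ≤ ‖w‖ + ‖w - v‖ := by
        calc ‖v‖ = ‖w - (w - v)‖ := by congr 1; abel
          _ ≤ ‖w‖ + ‖w - v‖ := norm_sub_le _ _
      linarith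
    have hvv : brkRe G v v ≤ 4 * (1/((n:ℝ)+1)) := by
      have e1 : brkRe G v v = ‖l n‖^2 * brkRe G ((u n:H)) ((u n:H)) := brkRe_smul G (l n) _
      have e2 : brkRe G ((u n:H)) ((u n:H)) =
          ((t n)⁻¹)^2 * brkRe G ((y n:H)) ((y n:H)) := by
        rw [huH n, brkRe_smul, Complex.norm_real, Real.norm_eq_abs,
          abs_of_pos (inv_pos.2 hT0)]
      rw [e1, e2]
      have hln : ‖l n‖ ≤ 2 * t n := by
        have := hlle n
        have := hη1 n
        linarith
      have hfac : ‖l n‖^2 * ((t n)⁻¹)^2 ≤ 4 := by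
        have hml : ‖l n‖ * (t n)⁻¹ ≤ 2 := by
          calc ‖l n‖ * (t n)⁻¹ ≤ (2 * t n) * (t n)⁻¹ :=
                mul_le_mul_of_nonneg_right hln (by positivity)
            _ = 2 := by field_simp
        have hnn : 0 ≤ ‖l n‖ * (t n)⁻¹ := mul_nonneg (norm_nonneg _) (inv_nonneg.2 hT0.le)
        have h2sq := mul_le_mul hml hml hnn (by norm_num : (0:ℝ) ≤ 2)
        nlinarith [h2sq]
      have hy3' := le_of_lt (hy3 n)
      calc ‖l n‖^2 * (((t n)⁻¹)^2 * brkRe G ((y n:H)) ((y n:H)))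
          = (‖l n‖^2 * ((t n)⁻¹)^2) * brkRe G ((y n:H)) ((y n:H)) := by ring
        _ ≤ (‖l n‖^2 * ((t n)⁻¹)^2) * (1/((n:ℝ)+1)) :=
            mul_le_mul_of_nonneg_left hy3' (by positivity)
        _ ≤ 4 * (1/((n:ℝ)+1)) := mul_le_mul_of_nonneg_right hfac (by positivity)
    have hdiff := brkRe_diff_le G w v
    have hfle : brkRe G w w ≤ brkRe G v v + (‖G‖*‖w-v‖*‖w‖ + ‖G‖*‖v‖*‖w-v‖) := by
      have h1 := le_abs_self (brkRe G w w - brkRe G v v)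
      linarith
    have hb2 : ‖G‖*‖w-v‖*‖w‖ + ‖G‖*‖v‖*‖w-v‖ ≤ 3*‖G‖*(1/(n:ℝ)) := by
      have hGn : (0:ℝ) ≤ ‖G‖ := norm_nonneg _
      have h1 : ‖w - v‖ ≤ 1/(n:ℝ) := le_trans hwv' hTinv
      have e1 : ‖G‖*‖w-v‖*‖w‖ = ‖G‖*‖w-v‖ := by rw [hw1, mul_one]
      have t1 : ‖G‖*‖w-v‖ ≤ ‖G‖*(1/(n:ℝ)) := mul_le_mul_of_nonneg_left h1 hGn
      have t2' : ‖v‖*‖w-v‖ ≤ 2*(1/(n:ℝ)) :=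
        mul_le_mul hv2 h1 (norm_nonneg _) (by norm_num)
      have t2 : ‖G‖*(‖v‖*‖w-v‖) ≤ ‖G‖*(2*(1/(n:ℝ))) := mul_le_mul_of_nonneg_left t2' hGn
      have e2 : ‖G‖*‖v‖*‖w-v‖ = ‖G‖*(‖v‖*‖w-v‖) := by ring
      linarith
    have h4 : brkRe G v v ≤ 4 * (1/(n:ℝ)) := by
      refine hvv.trans ?_
      have := mul_le_mul_of_nonneg_left hηn (by norm_num : (0:ℝ) ≤ 4)
      linarith
    show brkRe G w w ≤ (4 + 3*‖G‖) * (1/(n:ℝ))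
    have : (4 + 3*‖G‖) * (1/(n:ℝ)) = 4*(1/(n:ℝ)) + 3*‖G‖*(1/(n:ℝ)) := by ring
    linarith
  have hCn : Tendsto (fun n : ℕ => (4 + 3*‖G‖) * (1/(n:ℝ))) atTop (𝓝 ((4 + 3*‖G‖)*0)) :=
    tendsto_one_div_atTop_nhds_zero_nat.const_mul _
  rw [mul_zero] at hCn
  have hev2 : ∀ᶠ n : ℕ in atTop, (4 + 3*‖G‖) * (1/(n:ℝ)) < c := hCn.eventually_lt_const hc
  obtain ⟨n, ⟨h1, h2⟩, h3⟩ := ((hev.and hupper).and hev2).exists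
  linarith



theorem keyPP (G : H →L[ℂ] H) (A : H →ₗ.[ℂ] H)
    (K : Set (OnePoint ℂ)) (hK : IsCompact K)
    (hsub : K ∩ extSigmaAp A ⊆ extPP G A) :
    ∃ U : Set (OnePoint ℂ), IsOpen U ∧ K ⊆ U ∧ ∃ ε : ℝ, 0 < ε ∧
      (∀ l : ℂ, (l : OnePoint ℂ) ∈ U → ∀ x : A.domain,
        ‖A x - l • (x : H)‖ ≤ ε * ‖(x : H)‖ →
          ε * ‖(x : H)‖ ^ 2 ≤ brkRe G (x : H) (x : H)) ∧
      U ∩ extSigmaAp A ⊆ extPP G A := by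
  have hlocal : ∀ p ∈ K, ∃ V : Set (OnePoint ℂ), IsOpen V ∧ p ∈ V ∧
      (∞ ∈ V → ¬ IsBoundedOp A → sigmaPPInfty G A) ∧
      ∃ ε : ℝ, 0 < ε ∧ ∀ l : ℂ, (l : OnePoint ℂ) ∈ V → ∀ x : A.domain,
        ‖A x - l • (x : H)‖ ≤ ε * ‖(x : H)‖ →
          ε * ‖(x : H)‖ ^ 2 ≤ brkRe G (x : H) (x : H) := by
    intro p hp
    induction p using OnePoint.rec with
    | infty =>
      by_cases hb : IsBoundedOp A
      · obtain ⟨C, hC⟩ := hb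
        set C' := max C 0 with hC'
        refine ⟨(OnePoint.some '' Metric.closedBall (0:ℂ) (C' + 1))ᶜ,
          OnePoint.isOpen_compl_image_coe.2 ⟨Metric.isClosed_closedBall, isCompact_closedBall _ _⟩,
          OnePoint.infty_notMem_image_coe, ?_, 1/2, by norm_num, ?_⟩
        · intro _ hnb
          exact absurd ⟨C, hC⟩ hnb
        · intro lc hl x hle
          have hlnorm : C' + 1 < ‖lc‖ := by
            have hmem : lc ∉ Metric.closedBall (0:ℂ) (C'+1) :=
              fun hmem => hl (Set.mem_image_of_mem _ hmem)
            rw [Metric.mem_closedBall, dist_zero_right, not_le] at hmem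
            exact hmem
          have hAx : ‖(A x : H)‖ ≤ C' * ‖(x:H)‖ :=
            (hC x).trans (mul_le_mul_of_nonneg_right (le_max_left _ _) (norm_nonneg _))
          have h1 : ‖lc • ((x:H))‖ - ‖(A x : H)‖ ≤ ‖A x - lc • ((x:H))‖ := by
            rw [norm_sub_rev]
            exact norm_sub_norm_le _ _
          rw [norm_smul] at h1
          have hx0 : ‖(x:H)‖ = 0 := by
            by_contra hne
            have hxp : 0 < ‖(x:H)‖ := lt_of_le_of_ne (norm_nonneg _) (Ne.symm hne)
            have : (C'+1) * ‖(x:H)‖ < ‖lc‖ * ‖(x:H)‖ :=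
              mul_lt_mul_of_pos_right hlnorm hxp
            nlinarith
          have hxz : (x:H) = 0 := norm_eq_zero.1 hx0
          rw [hxz, brkRe_zero]
          simp
      · have hmem : (∞ : OnePoint ℂ) ∈ K ∩ extSigmaAp A := ⟨hp, Or.inr ⟨rfl, hb⟩⟩
        have hppi : sigmaPPInfty G A := by
          rcases hsub hmem with ⟨lc, hlc, _⟩ | ⟨_, h⟩
          · exact absurd hlc.symm (OnePoint.coe_ne_infty lc)
          · exact h
        obtain ⟨R, ε, hε, hQ⟩ := inftyPP_claim G A hppi.2
        refine ⟨(OnePoint.some '' Metric.closedBall (0:ℂ) (max R 0))ᶜ,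
          OnePoint.isOpen_compl_image_coe.2 ⟨Metric.isClosed_closedBall, isCompact_closedBall _ _⟩,
          OnePoint.infty_notMem_image_coe, fun _ _ => hppi, ε, hε, ?_⟩
        intro lc hl x hle
        have hlnorm : max R 0 < ‖lc‖ := by
          have hmem2 : lc ∉ Metric.closedBall (0:ℂ) (max R 0) :=
            fun hmem2 => hl (Set.mem_image_of_mem _ hmem2)
          rw [Metric.mem_closedBall, dist_zero_right, not_le] at hmem2
          exact hmem2
        exact hQ lc (lt_of_le_of_lt (le_max_left _ _) hlnorm) x hle
    | coe l₀ =>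
      by_cases hs : l₀ ∈ sigmaAp A
      · have hmem : (l₀ : OnePoint ℂ) ∈ K ∩ extSigmaAp A := ⟨hp, Or.inl ⟨l₀, rfl, hs⟩⟩
        have hppl : PiPlusCond G A l₀ ⊤ := by
          rcases hsub hmem with ⟨lc, hlc, hsig⟩ | ⟨hinf, _⟩
          · rw [OnePoint.coe_eq_coe] at hlc
            rw [hlc]
            exact hsig.2
          · exact absurd hinf (OnePoint.coe_ne_infty l₀)
        obtain ⟨δ, ε, hδ, hε, hQ⟩ := localPP_of_PP G A l₀ hppl
        refine ⟨OnePoint.some '' Metric.ball l₀ δ,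
          OnePoint.isOpen_image_coe.2 Metric.isOpen_ball,
          Set.mem_image_of_mem _ (Metric.mem_ball_self hδ),
          fun h => absurd h OnePoint.infty_notMem_image_coe, ε, hε, ?_⟩
        intro lc hl x hle
        have hball : ‖lc - l₀‖ < δ := by
          obtain ⟨a, ha, hae⟩ := hl
          rw [OnePoint.coe_eq_coe] at hae
          rw [← hae]
          rwa [Metric.mem_ball, dist_eq_norm] at ha
        exact hQ lc hball x hle
      · obtain ⟨c, hc, hbound⟩ := exists_lowerBound_of_not_mem_sigmaAp A l₀ hs
        refine ⟨OnePoint.some '' Metric.ball l₀ (c/4),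
          OnePoint.isOpen_image_coe.2 Metric.isOpen_ball,
          Set.mem_image_of_mem _ (Metric.mem_ball_self (by linarith)),
          fun h => absurd h OnePoint.infty_notMem_image_coe, c/4, by linarith, ?_⟩
        intro lc hl x hle
        have hball : ‖lc - l₀‖ < c/4 := by
          obtain ⟨a, ha, hae⟩ := hl
          rw [OnePoint.coe_eq_coe] at hae
          rw [← hae]
          rwa [Metric.mem_ball, dist_eq_norm] at ha
        have hsplit : A x - l₀ • ((x : H)) =
            (A x - lc • ((x:H))) + (lc - l₀) • ((x:H)) := by
          rw [sub_smul]; abel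
        have h2 : ‖A x - l₀ • ((x:H))‖ ≤ (c/2) * ‖(x:H)‖ := by
          rw [hsplit]
          calc ‖(A x - lc • ((x:H))) + (lc - l₀) • ((x:H))‖
              ≤ ‖A x - lc • ((x:H))‖ + ‖(lc - l₀) • ((x:H))‖ := norm_add_le _ _
            _ ≤ (c/4) * ‖(x:H)‖ + (c/4) * ‖(x:H)‖ := by
                refine add_le_add hle ?_
                rw [norm_smul]
                exact mul_le_mul_of_nonneg_right (le_of_lt hball) (norm_nonneg _)
            _ = (c/2) * ‖(x:H)‖ := by ring
        have hx0 : ‖(x:H)‖ = 0 := by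
          have := hbound x
          nlinarith [norm_nonneg (x:H)]
        have hxz : (x:H) = 0 := norm_eq_zero.1 hx0
        rw [hxz, brkRe_zero]
        simp
  choose! V hVopen hVmem hVinf eps hepspos hQ using hlocal
  obtain ⟨t, htK, hcover⟩ := hK.elim_nhds_subcover V
    (fun p hp => (hVopen p hp).mem_nhds (hVmem p hp))
  by_cases hne : t.Nonempty
  · set U : Set (OnePoint ℂ) := ⋃ p ∈ t, V p with hU
    set ε : ℝ := t.inf' hne eps with hε
    have hεpos : 0 < ε := (Finset.lt_inf'_iff hne).2 fun p hp => hepspos p (htK p hp)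
    have hquant : ∀ l : ℂ, (l : OnePoint ℂ) ∈ U → ∀ x : A.domain,
        ‖A x - l • (x : H)‖ ≤ ε * ‖(x : H)‖ →
          ε * ‖(x : H)‖ ^ 2 ≤ brkRe G (x : H) (x : H) := by
      intro l hl x hle
      rw [hU, Set.mem_iUnion₂] at hl
      obtain ⟨p, hpt, hlp⟩ := hl
      have hεle : ε ≤ eps p := Finset.inf'_le eps hpt
      have h1 := hQ p (htK p hpt) l hlp x
        (hle.trans (mul_le_mul_of_nonneg_right hεle (norm_nonneg _)))
      calc ε * ‖(x:H)‖^2 ≤ eps p * ‖(x:H)‖^2 :=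
            mul_le_mul_of_nonneg_right hεle (by positivity)
        _ ≤ brkRe G (x:H) (x:H) := h1
    refine ⟨U, isOpen_biUnion fun p hp => hVopen p (htK p hp), hcover, ε, hεpos, hquant, ?_⟩
    rintro q ⟨hqU, hqS⟩
    rcases hqS with ⟨l, hql, hlap⟩ | ⟨hqi, hnb⟩
    · subst hql
      refine Or.inl ⟨l, rfl, hlap, ?_⟩
      intro x _ hx
      have hsm : ∀ᶠ n : ℕ in atTop, ‖A (x n) - l • ((x n : H))‖ < ε := by
        have hnorm : Tendsto (fun n => ‖A (x n) - l • ((x n : H))‖) atTop (𝓝 0) := by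
          simpa using hx.2.norm
        exact hnorm.eventually_lt_const hεpos
      have hev : ∀ᶠ n : ℕ in atTop, ε ≤ brkRe G ((x n : H)) ((x n : H)) := by
        refine hsm.mono fun n hn => ?_
        have h := hquant l hqU (x n) (by rw [hx.1 n, mul_one]; exact le_of_lt hn)
        rw [hx.1 n] at h
        simpa using h
      have hcb : Filter.IsCoboundedUnder (· ≥ ·) atTop
          (fun n => brkRe G ((x n : H)) ((x n : H))) :=
        (isBddAbove_of _ ‖G‖ (fun n => (abs_le.1 (bound_brkRe_one G (hx.1 n))).2)).isCoboundedUnder_ge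
      exact lt_of_lt_of_le hεpos (Filter.le_liminf_of_le hcb hev)
    · subst hqi
      refine Or.inr ⟨rfl, ?_⟩
      rw [hU, Set.mem_iUnion₂] at hqU
      obtain ⟨p, hpt, hpinf⟩ := hqU
      exact hVinf p (htK p hpt) hpinf hnb
  · rw [Finset.not_nonempty_iff_eq_empty] at hne
    subst hne
    simp only [Finset.notMem_empty, Set.iUnion_of_empty, Set.iUnion_empty] at hcover
    refine ⟨∅, isOpen_empty, hcover, 1, one_pos, ?_, ?_⟩
    · intro l hl
      exact absurd hl (Set.notMem_empty _)
    · simp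


/-- Compact sets meeting the extended approximate point spectrum only in
spectral points of positive (negative) type. -/
theorem statement_2 [CompleteSpace H] (G : H →L[ℂ] H) (hG : IsSelfAdjoint G)
    (A : H →ₗ.[ℂ] H) (hAc : A.IsClosed) (hAd : Dense (A.domain : Set H))
    (K : Set (OnePoint ℂ)) (hK : IsCompact K) :
    (K ∩ extSigmaAp A ⊆ extPP G A →
      ∃ U : Set (OnePoint ℂ), IsOpen U ∧ K ⊆ U ∧ ∃ ε : ℝ, 0 < ε ∧
        (∀ l : ℂ, (l : OnePoint ℂ) ∈ U → ∀ x : A.domain,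
          ‖A x - l • (x : H)‖ ≤ ε * ‖(x : H)‖ →
            ε * ‖(x : H)‖ ^ 2 ≤ brkRe G (x : H) (x : H)) ∧
        U ∩ extSigmaAp A ⊆ extPP G A) ∧
    (K ∩ extSigmaAp A ⊆ extMM G A →
      ∃ U : Set (OnePoint ℂ), IsOpen U ∧ K ⊆ U ∧ ∃ ε : ℝ, 0 < ε ∧
        (∀ l : ℂ, (l : OnePoint ℂ) ∈ U → ∀ x : A.domain,
          ‖A x - l • (x : H)‖ ≤ ε * ‖(x : H)‖ →
            ε * ‖(x : H)‖ ^ 2 ≤ -brkRe G (x : H) (x : H)) ∧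
        U ∩ extSigmaAp A ⊆ extMM G A) := by
  constructor
  · intro hPPsub
    exact keyPP G A K hK hPPsub
  · intro hMMsub
    have h1 : K ∩ extSigmaAp A ⊆ extPP (-G) A := by
      rw [extPP_neg]
      exact hMMsub
    obtain ⟨U, hU, hKU, ε, hε, hq, hincl⟩ := keyPP (-G) A K hK h1
    refine ⟨U, hU, hKU, ε, hε, ?_, ?_⟩
    · intro l hl x hx
      have h := hq l hl x hx
      rwa [brkRe_neg] at h
    · rw [← extPP_neg]
      exact hincl

end Paper
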